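/- Let S = ℕ with the semigroup operation m·n = max{m,n}. Then the semigroup algebra ℓ¹(S) is strong pseudo-amenable but not amenable. -/

import Mathlib

noncomputable section

open ContinuousLinearMap NormedSpace

/-- A directed index system for nets. -/
structure DirSys : Type 1 where
  ι : Type
  le : ι → ι → Prop
  refl : ∀ i, le i i
  trans : ∀ {i j k}, le i j → le j k → le i k
  nonempty : Nonempty ι
  directed : ∀ i j, ∃ k, le i k ∧ le j k

/-- Convergence of a net indexed by a directed system, in a (pseudo)metric space. -/
def DirSys.Tendsto (D : DirSys) {X : Type*} [PseudoMetricSpace X] (m : D.ι → X) (x : X) : Prop :=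
  ∀ ε : ℝ, 0 < ε → ∃ i, ∀ j, D.le i j → dist (m j) x < ε

variable (A : Type*) [NonUnitalNormedRing A] [NormedSpace ℂ A]
  [IsScalarTower ℂ A A] [SMulCommClass ℂ A A]

/-- The continuous bilinear forms on `A`, i.e. the dual space of the projective tensor
product `A ⊗̂ A`. -/
abbrev BilForms := A →L[ℂ] StrongDual ℂ A

/-- The bidual `(A ⊗̂ A)**` of the projective tensor product, realized concretely as the
dual space of the space of continuous bilinear forms on `A` (the latter being canonically,
isometrically, the dual of `A ⊗̂ A`). -/
abbrev TensorBidual := StrongDual ℂ (BilForms A)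

instance : NormedAddCommGroup (TensorBidual A) :=
  @ContinuousLinearMap.toNormedAddCommGroup ℂ ℂ (BilForms A) ℂ _ _ _ _ _ _ (RingHom.id ℂ) _

instance : NormedSpace ℂ (TensorBidual A) :=
  @ContinuousLinearMap.toNormedSpace ℂ ℂ (BilForms A) ℂ _ _ _ _ _ _ (RingHom.id ℂ) _ ℂ _ _ _

/-- The bidual `A**` of `A`. -/
abbrev Bidual := StrongDual ℂ (StrongDual ℂ A)

variable {A}

/-- The elementary tensor `x ⊗ y`, viewed inside `(A ⊗̂ A)**` via the canonical isometric
embedding of `A ⊗̂ A` into its bidual. -/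
def elemT (x y : A) : TensorBidual A :=
  (ContinuousLinearMap.apply ℂ ℂ y).comp (ContinuousLinearMap.apply ℂ (StrongDual ℂ A) x)

variable (A)

/-- The canonical isometric copy of `A ⊗̂ A` inside its bidual: the closure of the linear
span of the elementary tensors. -/
def ptp : Submodule ℂ (TensorBidual A) :=
  (Submodule.span ℂ {m : TensorBidual A | ∃ x y : A, m = elemT x y}).topologicalClosure

/-- The map `f ↦ f·a` on bilinear forms, `(f·a)(x,y) = f(ax, y)`; predual of the left
module action of `A` on `(A ⊗̂ A)**`. -/
def leftBil (a : A) : BilForms A →L[ℂ] BilForms A :=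
  (compL ℂ A A (StrongDual ℂ A)).flip (ContinuousLinearMap.mul ℂ A a)

/-- The map `f ↦ a·f` on bilinear forms, `(a·f)(x,y) = f(x, ya)`; predual of the right
module action of `A` on `(A ⊗̂ A)**`. -/
def rightBil (a : A) : BilForms A →L[ℂ] BilForms A :=
  compL ℂ A (StrongDual ℂ A) (StrongDual ℂ A)
    ((compL ℂ A A ℂ).flip ((ContinuousLinearMap.mul ℂ A).flip a))

variable {A}

/-- The left module action `a · m` of `A` on `(A ⊗̂ A)**`, extending
`a · (x ⊗ y) = (a x) ⊗ y`. -/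
def tsmulL (a : A) (m : TensorBidual A) : TensorBidual A := m.comp (leftBil A a)

/-- The right module action `m · a` of `A` on `(A ⊗̂ A)**`, extending
`(x ⊗ y) · a = x ⊗ (y a)`. -/
def tsmulR (a : A) (m : TensorBidual A) : TensorBidual A := m.comp (rightBil A a)

variable (A)

/-- The adjoint `π_A* : A* → (A ⊗̂ A)*` of the product morphism `π_A`, namely
`(π_A* f)(x, y) = f (x y)`. -/
def piStar : StrongDual ℂ A →L[ℂ] BilForms A :=
  ((compL ℂ A (A →L[ℂ] A) (StrongDual ℂ A)).flip (ContinuousLinearMap.mul ℂ A)).comp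
    (compL ℂ A A ℂ)

variable {A}

/-- The second adjoint `π_A** : (A ⊗̂ A)** → A**` of the product morphism. -/
def piSS (m : TensorBidual A) : Bidual A := m.comp (piStar A)

variable (A)

/-- The map `f ↦ f·a` on `A*`, `(f·a)(x) = f(ax)`. -/
def dualROp (a : A) : StrongDual ℂ A →L[ℂ] StrongDual ℂ A :=
  (compL ℂ A A ℂ).flip (ContinuousLinearMap.mul ℂ A a)

/-- The map `f ↦ a·f` on `A*`, `(a·f)(x) = f(xa)`. -/
def dualLOp (a : A) : StrongDual ℂ A →L[ℂ] StrongDual ℂ A :=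
  (compL ℂ A A ℂ).flip ((ContinuousLinearMap.mul ℂ A).flip a)

variable {A}

/-- The product `a · Φ` of `a ∈ A` and `Φ ∈ A**`: `(a·Φ)(f) = Φ(f·a)`. -/
def bsmulL (a : A) (Φ : Bidual A) : Bidual A := Φ.comp (dualROp A a)

/-- The product `Φ · a` of `Φ ∈ A**` and `a ∈ A`: `(Φ·a)(f) = Φ(a·f)`. -/
def bsmulR (a : A) (Φ : Bidual A) : Bidual A := Φ.comp (dualLOp A a)

/-- The canonical isometric embedding of `A` into its bidual. -/
def inclB (a : A) : Bidual A := NormedSpace.inclusionInDoubleDual ℂ A a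

variable (A)

/-- A Banach algebra `A` is *strong pseudo-amenable* if there is a (not necessarily bounded)
net `(m_α)` in `(A ⊗̂ A)**` such that `a·m_α − m_α·a → 0` and
`a·π_A**(m_α) = π_A**(m_α)·a → a` for every `a ∈ A`. -/
def StrongPseudoAmenable : Prop :=
  ∃ (D : DirSys) (m : D.ι → TensorBidual A),
    (∀ a : A, D.Tendsto (fun α => tsmulL a (m α) - tsmulR a (m α)) 0) ∧
    (∀ (a : A) (α : D.ι), bsmulL a (piSS (m α)) = bsmulR a (piSS (m α))) ∧
    (∀ a : A, D.Tendsto (fun α => bsmulR a (piSS (m α))) (inclB a))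

/-- A Banach algebra `A` is *pseudo-amenable* if there is a (not necessarily bounded)
net `(m_α)` in `A ⊗̂ A` such that `a·m_α − m_α·a → 0` and `π_A(m_α)a → a` for every `a ∈ A`. -/
def PseudoAmenable : Prop :=
  ∃ (D : DirSys) (m : D.ι → TensorBidual A),
    (∀ α, m α ∈ ptp A) ∧
    (∀ a : A, D.Tendsto (fun α => tsmulL a (m α) - tsmulR a (m α)) 0) ∧
    (∀ a : A, D.Tendsto (fun α => bsmulR a (piSS (m α))) (inclB a))

/-- A Banach algebra `A` is *pseudo-contractible* if there is a net `(m_α)` in `A ⊗̂ A`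
such that `a·m_α = m_α·a` and `π_A(m_α)a → a` for every `a ∈ A`. -/
def PseudoContractible : Prop :=
  ∃ (D : DirSys) (m : D.ι → TensorBidual A),
    (∀ α, m α ∈ ptp A) ∧
    (∀ (a : A) (α : D.ι), tsmulL a (m α) = tsmulR a (m α)) ∧
    (∀ a : A, D.Tendsto (fun α => bsmulR a (piSS (m α))) (inclB a))

/-- A Banach algebra `A` is *amenable* if it has a bounded approximate diagonal: a bounded
net `(m_α)` in `A ⊗̂ A` such that `a·m_α − m_α·a → 0` and `π_A(m_α)a → a` for every `a ∈ A`. -/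
def AmenableBanachAlgebra : Prop :=
  ∃ (D : DirSys) (m : D.ι → TensorBidual A) (C : ℝ),
    (∀ α, m α ∈ ptp A) ∧
    (∀ α, ‖m α‖ ≤ C) ∧
    (∀ a : A, D.Tendsto (fun α => tsmulL a (m α) - tsmulR a (m α)) 0) ∧
    (∀ a : A, D.Tendsto (fun α => bsmulR a (piSS (m α))) (inclB a))

end

/-- `(L, δ)` is a realization of the semigroup algebra `ℓ¹(S)` for the semigroup
multiplication `mulS` on `S`: the `δ s` are the point masses, multiplication is
convolution (determined by `δ s * δ t = δ (s t)`), finite linear combinations of point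
masses carry the `ℓ¹`-norm, and they have dense linear span. -/
def IsL1SemigroupAlgebra (S : Type) (mulS : S → S → S) (L : Type)
    [NonUnitalNormedRing L] [NormedSpace ℂ L] (δ : S → L) : Prop :=
  (∀ s t : S, δ s * δ t = δ (mulS s t)) ∧
  (∀ (F : Finset S) (c : S → ℂ), ‖∑ s ∈ F, c s • δ s‖ = ∑ s ∈ F, ‖c s‖) ∧
  ((Submodule.span ℂ (Set.range δ)).topologicalClosure = ⊤)

/-!
Write `φₙ = charLE δ n` for the character of `ℓ¹(ℕ, max)` that is the indicator of `{0, …, n}`,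
and `qₖ = δₖ - δₖ₊₁`. Each `qₖ` is an idempotent on which `ℓ¹` acts through `φₖ`, so `qₖ ⊗ qₖ` is
central, and `mₙ = approxDiagonal δ n = ∑_{k ≤ n} qₖ ⊗ qₖ + δₙ₊₁ ⊗ δₙ₊₁` satisfies `π(mₙ) = δ₀`,
the identity. The commutator `a·mₙ - mₙ·a` only involves `δₙ₊₁`, and it vanishes for `a = δⱼ`
once `n ≥ j`; since it is bounded by `2‖a‖`, it tends to `0` for every `a`. Hence strong
pseudo-amenability.

Against a bounded approximate diagonal `(m_α)`, test the bilinear forms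
`F_N = ∑_{k < N} coeffₖ ⊗ φₖ`. They have norm `≤ 1` because the `coeffₖ` are the `ℓ¹`
coordinates and `‖φₖ‖ ≤ 1`, yet each `m_α(coeffₖ ⊗ φₖ)` tends to `1`, so `m_α(F_N) → N` for
every `N`, which is incompatible with `‖m_α‖ ≤ C`.
-/

open Filter Topology Finsupp ContinuousLinearMap

theorem tendsto_zero_of_norm_le_of_tendsto_span {ι κ 𝕜 E F : Type*} [NontriviallyNormedField 𝕜]
    [NormedAddCommGroup E] [NormedSpace 𝕜 E] [NormedAddCommGroup F] [NormedSpace 𝕜 F]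
    {l : Filter ι} {T : ι → E →L[𝕜] F} {C : ℝ} (hT : ∀ i, ‖T i‖ ≤ C) {v : κ → E}
    (hv : (Submodule.span 𝕜 (Set.range v)).topologicalClosure = ⊤)
    (h : ∀ k, Tendsto (fun i => T i (v k)) l (𝓝 0)) (x : E) :
    Tendsto (fun i => T i x) l (𝓝 0) := by
  let P : Submodule 𝕜 E :=
    { carrier := {x | Tendsto (fun i => T i x) l (𝓝 0)}
      add_mem' := fun hx hy => by simpa using hx.add hy
      zero_mem' := by simpa using tendsto_const_nhds
      smul_mem' := fun c _ hx => by simpa using hx.const_smul c }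
  have hequi : Equicontinuous ((↑) ∘ T : ι → E → F) := by
    have := (NormedSpace.equicontinuous_TFAE T).out 5 1
    exact this.mp ⟨C, hT⟩
  have hP : IsClosed (P : Set E) := hequi.isClosed_setOfPred_tendsto (f := 0) continuous_const
  have hspan : Submodule.span 𝕜 (Set.range v) ≤ P :=
    Submodule.span_le.2 (Set.range_subset_iff.2 h)
  have := Submodule.topologicalClosure_minimal _ hspan hP
  rw [hv] at this
  exact this Submodule.mem_top

theorem norm_ite_one_zero_le (p : Prop) [Decidable p] : ‖(if p then 1 else 0 : ℂ)‖ ≤ 1 := by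
  split_ifs <;> simp

namespace DirSys

def filter (D : DirSys) : Filter D.ι := ⨅ i, 𝓟 {j | D.le i j}

theorem hasBasis_filter (D : DirSys) :
    D.filter.HasBasis (fun _ => True) fun i => {j | D.le i j} :=
  haveI := D.nonempty
  hasBasis_iInf_principal fun i j =>
    let ⟨k, hik, hjk⟩ := D.directed i j
    ⟨k, fun _ hl => D.trans hik hl, fun _ hl => D.trans hjk hl⟩

instance filter_neBot (D : DirSys) : D.filter.NeBot :=
  D.hasBasis_filter.neBot_iff.2 fun {i} _ => ⟨i, D.refl i⟩

theorem tendsto_iff {D : DirSys} {X : Type*} [PseudoMetricSpace X] {m : D.ι → X} {x : X} :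
    D.Tendsto m x ↔ Filter.Tendsto m D.filter (𝓝 x) := by
  simp [D.hasBasis_filter.tendsto_iff Metric.nhds_basis_ball, DirSys.Tendsto]

def ofDirected (ι : Type) [Preorder ι] [IsDirectedOrder ι] [Nonempty ι] : DirSys :=
  ⟨ι, (· ≤ ·), le_refl, le_trans, ‹_›, directed_of (· ≤ ·)⟩

end DirSys

section Tensor

variable {A : Type*} [NonUnitalNormedRing A] [NormedSpace ℂ A]

theorem elemT_smul_left (c : ℂ) (x y : A) : elemT (c • x) y = c • elemT x y := by
  ext f; simp [elemT]

theorem elemT_smul_right (c : ℂ) (x y : A) : elemT x (c • y) = c • elemT x y := by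
  ext f; simp [elemT]

theorem norm_elemT_le (x y : A) : ‖elemT x y‖ ≤ ‖x‖ * ‖y‖ := by
  refine opNorm_le_bound _ (by positivity) fun f => ?_
  calc ‖f x y‖ ≤ ‖f x‖ * ‖y‖ := (f x).le_opNorm y
    _ ≤ ‖f‖ * ‖x‖ * ‖y‖ := by gcongr; exact f.le_opNorm x
    _ = ‖x‖ * ‖y‖ * ‖f‖ := by ring

variable [IsScalarTower ℂ A A] [SMulCommClass ℂ A A]

theorem tsmulL_elemT (a x y : A) : tsmulL a (elemT x y) = elemT (a * x) y := rfl

theorem tsmulR_elemT (a x y : A) : tsmulR a (elemT x y) = elemT x (y * a) := rfl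

theorem piSS_elemT (x y : A) : piSS (elemT x y) = inclB (x * y) := rfl

theorem tsmulL_add (a : A) (m m' : TensorBidual A) :
    tsmulL a (m + m') = tsmulL a m + tsmulL a m' := rfl

theorem tsmulR_add (a : A) (m m' : TensorBidual A) :
    tsmulR a (m + m') = tsmulR a m + tsmulR a m' := rfl

theorem piSS_add (m m' : TensorBidual A) : piSS (m + m') = piSS m + piSS m' := rfl

theorem tsmulL_sum {β : Type*} (a : A) (s : Finset β) (m : β → TensorBidual A) :
    tsmulL a (∑ i ∈ s, m i) = ∑ i ∈ s, tsmulL a (m i) := by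
  ext f; simp [tsmulL]

theorem tsmulR_sum {β : Type*} (a : A) (s : Finset β) (m : β → TensorBidual A) :
    tsmulR a (∑ i ∈ s, m i) = ∑ i ∈ s, tsmulR a (m i) := by
  ext f; simp [tsmulR]

theorem piSS_sum {β : Type*} (s : Finset β) (m : β → TensorBidual A) :
    piSS (∑ i ∈ s, m i) = ∑ i ∈ s, piSS (m i) := by
  ext f; simp [piSS]

variable (A) in
noncomputable def commutatorCLM (m : TensorBidual A) : A →L[ℂ] TensorBidual A :=
  (compL ℂ (BilForms A) (BilForms A) ℂ m).comp
    ((compL ℂ A A (StrongDual ℂ A)).flip.comp (ContinuousLinearMap.mul ℂ A) -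
      (compL ℂ A (StrongDual ℂ A) (StrongDual ℂ A)).comp
        ((compL ℂ A A ℂ).flip.comp (ContinuousLinearMap.mul ℂ A).flip))

theorem commutatorCLM_apply (m : TensorBidual A) (a : A) :
    commutatorCLM A m a = tsmulL a m - tsmulR a m := by
  ext f
  show m _ = m _ - m _
  rw [← map_sub]
  rfl

end Tensor

section Amenability

variable {A : Type*} [NonUnitalNormedRing A] [NormedSpace ℂ A] [IsScalarTower ℂ A A]
  [SMulCommClass ℂ A A]

theorem strongPseudoAmenable_of_piSS_eq_identity {D : DirSys} {m : D.ι → TensorBidual A} (e : A)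
    (he_left : ∀ a, e * a = a) (he_right : ∀ a, a * e = a) (hπ : ∀ α, piSS (m α) = inclB e)
    (hcomm : ∀ a, D.Tendsto (fun α => tsmulL a (m α) - tsmulR a (m α)) 0) :
    StrongPseudoAmenable A := by
  have hleft (a : A) (α : D.ι) : bsmulL a (piSS (m α)) = inclB a := by
    rw [hπ]; exact congrArg inclB (he_right a)
  have hright (a : A) (α : D.ι) : bsmulR a (piSS (m α)) = inclB a := by
    rw [hπ]; exact congrArg inclB (he_left a)
  refine ⟨D, m, hcomm, fun a α => (hleft a α).trans (hright a α).symm, fun a => ?_⟩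
  simpa only [hright, DirSys.tendsto_iff] using tendsto_const_nhds

theorem DirSys.Tendsto.apply_piStar_dualLOp {D : DirSys} {m : D.ι → TensorBidual A} {a : A}
    (h : D.Tendsto (fun α => bsmulR a (piSS (m α))) (inclB a)) (f : StrongDual ℂ A) :
    Filter.Tendsto (fun α => m α (piStar A (dualLOp A a f))) D.filter (𝓝 (f a)) :=
  ((ContinuousLinearMap.apply ℂ ℂ f).continuous.tendsto _).comp (DirSys.tendsto_iff.1 h)

theorem DirSys.Tendsto.apply_leftBil_sub_rightBil {D : DirSys} {m : D.ι → TensorBidual A}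
    {a : A} (h : D.Tendsto (fun α => tsmulL a (m α) - tsmulR a (m α)) 0) (G : BilForms A) :
    Filter.Tendsto (fun α => m α (leftBil A a G) - m α (rightBil A a G)) D.filter (𝓝 0) :=
  map_zero (ContinuousLinearMap.apply ℂ ℂ G) ▸
    ((ContinuousLinearMap.apply ℂ ℂ G).continuous.tendsto 0).comp (DirSys.tendsto_iff.1 h)

end Amenability

namespace IsL1SemigroupAlgebra

section

variable {S : Type} {mulS : S → S → S} {L : Type} [NonUnitalNormedRing L] [NormedSpace ℂ L]
  {δ : S → L}

theorem denseRange_linearCombination (hL : IsL1SemigroupAlgebra S mulS L δ) :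
    DenseRange (linearCombination ℂ δ) := by
  rw [DenseRange, ← LinearMap.coe_range, range_linearCombination,
    Submodule.dense_iff_topologicalClosure_eq_top]
  exact hL.2.2

theorem norm_linearCombination (hL : IsL1SemigroupAlgebra S mulS L δ) (c : S →₀ ℂ) :
    ‖linearCombination ℂ δ c‖ = ∑ s ∈ c.support, ‖c s‖ :=
  hL.2.1 c.support c

theorem norm_delta (hL : IsL1SemigroupAlgebra S mulS L δ) (s : S) : ‖δ s‖ = 1 := by
  simpa using hL.2.1 {s} 1

theorem clm_ext (hL : IsL1SemigroupAlgebra S mulS L δ) {F : Type*} [NormedAddCommGroup F]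
    [NormedSpace ℂ F] {f g : L →L[ℂ] F} (h : ∀ s, f (δ s) = g (δ s)) : f = g :=
  ContinuousLinearMap.ext_on (Submodule.dense_iff_topologicalClosure_eq_top.2 hL.2.2)
    (Set.forall_mem_range.2 h)

theorem clm_ext₂ (hL : IsL1SemigroupAlgebra S mulS L δ) {F : Type*} [NormedAddCommGroup F]
    [NormedSpace ℂ F] {f g : L →L[ℂ] L →L[ℂ] F} (h : ∀ s t, f (δ s) (δ t) = g (δ s) (δ t)) :
    f = g :=
  hL.clm_ext fun s => hL.clm_ext (h s)

variable (δ) in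
/-- The functional on `ℓ¹(S)` pairing with the bounded function `χ` (the duality `ℓ¹* = ℓ^∞`);
a junk value when `χ` is unbounded. -/
noncomputable def lift (χ : S → ℂ) : StrongDual ℂ L :=
  (linearCombination ℂ χ).extendOfNorm (linearCombination ℂ δ)

variable {χ : S → ℂ} {C : ℝ}

theorem norm_linearCombination_le (hL : IsL1SemigroupAlgebra S mulS L δ)
    (hχ : ∀ s, ‖χ s‖ ≤ C) (c : S →₀ ℂ) :
    ‖linearCombination ℂ χ c‖ ≤ C * ‖linearCombination ℂ δ c‖ := by
  rw [hL.norm_linearCombination, Finset.mul_sum, linearCombination_apply, Finsupp.sum]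
  refine (norm_sum_le _ _).trans (Finset.sum_le_sum fun s _ => ?_)
  rw [norm_smul, mul_comm]
  exact mul_le_mul_of_nonneg_right (hχ s) (norm_nonneg _)

theorem lift_linearCombination (hL : IsL1SemigroupAlgebra S mulS L δ) (hχ : ∀ s, ‖χ s‖ ≤ C)
    (c : S →₀ ℂ) : lift δ χ (linearCombination ℂ δ c) = linearCombination ℂ χ c :=
  LinearMap.extendOfNorm_eq hL.denseRange_linearCombination
    ⟨C, hL.norm_linearCombination_le hχ⟩ c

theorem lift_delta (hL : IsL1SemigroupAlgebra S mulS L δ) (hχ : ∀ s, ‖χ s‖ ≤ C) (s : S) :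
    lift δ χ (δ s) = χ s := by
  simpa using hL.lift_linearCombination hχ (single s 1)

theorem norm_lift_apply_le (hL : IsL1SemigroupAlgebra S mulS L δ) (hχ : ∀ s, ‖χ s‖ ≤ C)
    (a : L) : ‖lift δ χ a‖ ≤ C * ‖a‖ :=
  LinearMap.norm_extendOfNorm_apply_le hL.denseRange_linearCombination C
    (hL.norm_linearCombination_le hχ) a

theorem lift_mul [IsScalarTower ℂ L L] [SMulCommClass ℂ L L]
    (hL : IsL1SemigroupAlgebra S mulS L δ) (hχ : ∀ s, ‖χ s‖ ≤ C)
    (hχ_mul : ∀ s t, χ (mulS s t) = χ s * χ t) (a b : L) :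
    lift δ χ (a * b) = lift δ χ a * lift δ χ b := by
  have : (ContinuousLinearMap.compL ℂ L L ℂ (lift δ χ)).comp (ContinuousLinearMap.mul ℂ L) =
      (lift δ χ).smulRight (lift δ χ) :=
    hL.clm_ext₂ fun s t => by simp [hL.1, hL.lift_delta hχ, hχ_mul]
  simpa using congr($this a b)

variable [DecidableEq S]

variable (δ) in
noncomputable def coeff (s : S) : StrongDual ℂ L := lift δ fun t => if t = s then 1 else 0

theorem coeff_delta (hL : IsL1SemigroupAlgebra S mulS L δ) (s t : S) :
    coeff δ s (δ t) = if t = s then 1 else 0 :=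
  hL.lift_delta (fun _ => norm_ite_one_zero_le _) t

theorem coeff_linearCombination (hL : IsL1SemigroupAlgebra S mulS L δ) (c : S →₀ ℂ) (s : S) :
    coeff δ s (linearCombination ℂ δ c) = c s := by
  rw [coeff, hL.lift_linearCombination (fun _ => norm_ite_one_zero_le _), linearCombination_apply,
    Finsupp.sum]
  simp [eq_comm]

theorem norm_sum_coeff_smul_le (hL : IsL1SemigroupAlgebra S mulS L δ) {E : Type*}
    [NormedAddCommGroup E] [NormedSpace ℂ E] (s : Finset S) (v : S → E) {C : ℝ} (hC : 0 ≤ C)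
    (hv : ∀ t ∈ s, ‖v t‖ ≤ C) (x : L) : ‖∑ t ∈ s, coeff δ t x • v t‖ ≤ C * ‖x‖ := by
  refine hL.denseRange_linearCombination.induction_on x
    (isClosed_le (by fun_prop) (by fun_prop)) fun c => ?_
  simp only [hL.coeff_linearCombination, hL.norm_linearCombination]
  calc ‖∑ t ∈ s, c t • v t‖ ≤ ∑ t ∈ s, ‖c t‖ * C :=
        (norm_sum_le _ _).trans (Finset.sum_le_sum fun t ht => by
          rw [norm_smul]; exact mul_le_mul_of_nonneg_left (hv t ht) (norm_nonneg _))
    _ = C * ∑ t ∈ s with t ∈ c.support, ‖c t‖ := by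
        rw [← Finset.sum_mul, mul_comm, Finset.sum_filter_of_ne]
        intro t _ ht
        simpa using ht
    _ ≤ C * ∑ t ∈ c.support, ‖c t‖ :=
        mul_le_mul_of_nonneg_left (Finset.sum_le_sum_of_subset_of_nonneg
          (fun t ht => (Finset.mem_filter.1 ht).2) fun _ _ _ => norm_nonneg _) hC

end

variable {L : Type} [NonUnitalNormedRing L] [NormedSpace ℂ L] {δ : ℕ → L}

variable (δ) in
noncomputable def charLE (n : ℕ) : StrongDual ℂ L := lift δ fun k => if k ≤ n then 1 else 0

variable (δ) in
noncomputable def approxDiagonal (n : ℕ) : TensorBidual L :=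
  ∑ k ∈ Finset.range (n + 1), elemT (δ k - δ (k + 1)) (δ k - δ (k + 1)) +
    elemT (δ (n + 1)) (δ (n + 1))

variable (hL : IsL1SemigroupAlgebra ℕ max L δ)
include hL

theorem charLE_delta (n k : ℕ) : charLE δ n (δ k) = if k ≤ n then 1 else 0 :=
  hL.lift_delta (fun _ => norm_ite_one_zero_le _) k

theorem norm_charLE_le (n : ℕ) : ‖charLE δ n‖ ≤ 1 :=
  opNorm_le_bound _ zero_le_one (hL.norm_lift_apply_le fun _ => norm_ite_one_zero_le _)

theorem norm_sum_coeff_smulRight_charLE_le (N : ℕ) :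
    ‖∑ n ∈ Finset.range N, (coeff δ n).smulRight (charLE δ n)‖ ≤ 1 :=
  opNorm_le_bound _ zero_le_one fun x => by
    simpa using hL.norm_sum_coeff_smul_le _ (charLE δ) zero_le_one
      (fun n _ => hL.norm_charLE_le n) x

variable [IsScalarTower ℂ L L] [SMulCommClass ℂ L L]

theorem delta_zero_mul (a : L) : δ 0 * a = a := by
  have : ContinuousLinearMap.mul ℂ L (δ 0) = ContinuousLinearMap.id ℂ L :=
    hL.clm_ext fun s => by simp [hL.1]
  exact congr($this a)

theorem mul_delta_zero (a : L) : a * δ 0 = a := by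
  have : (ContinuousLinearMap.mul ℂ L).flip (δ 0) = ContinuousLinearMap.id ℂ L :=
    hL.clm_ext fun s => by simp [hL.1]
  exact congr($this a)

theorem charLE_mul (n : ℕ) (a b : L) : charLE δ n (a * b) = charLE δ n a * charLE δ n b :=
  hL.lift_mul (fun _ => norm_ite_one_zero_le _) (fun s t => by
    by_cases hs : s ≤ n <;> by_cases ht : t ≤ n <;> simp [hs, ht]) a b

theorem charLE_mul_delta_self (n : ℕ) (a : L) : charLE δ n (a * δ n) = charLE δ n a := by
  simp [hL.charLE_mul, hL.charLE_delta]

theorem coeff_delta_self_mul (n : ℕ) (a : L) : coeff δ n (δ n * a) = charLE δ n a := by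
  have : (coeff δ n).comp (ContinuousLinearMap.mul ℂ L (δ n)) = charLE δ n :=
    hL.clm_ext fun k => by simp [hL.1, hL.coeff_delta, hL.charLE_delta]
  exact congr($this a)

theorem mul_delta_sub_delta_succ (n : ℕ) (a : L) :
    a * (δ n - δ (n + 1)) = charLE δ n a • (δ n - δ (n + 1)) := by
  have : (ContinuousLinearMap.mul ℂ L).flip (δ n - δ (n + 1)) =
      (charLE δ n).smulRight (δ n - δ (n + 1)) :=
    hL.clm_ext fun k => by
      rcases le_or_gt k n with h | h
      · simp [hL.1, hL.charLE_delta, h, h.trans n.le_succ]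
      · simp [hL.1, hL.charLE_delta, h.not_ge, h.le, Nat.succ_le_of_lt h]
  exact congr($this a)

theorem delta_sub_delta_succ_mul (n : ℕ) (a : L) :
    (δ n - δ (n + 1)) * a = charLE δ n a • (δ n - δ (n + 1)) := by
  have : ContinuousLinearMap.mul ℂ L (δ n - δ (n + 1)) =
      (charLE δ n).smulRight (δ n - δ (n + 1)) :=
    hL.clm_ext fun k => by
      rw [ContinuousLinearMap.mul_apply', ContinuousLinearMap.smulRight_apply,
        ← hL.mul_delta_sub_delta_succ]
      simp [mul_sub, sub_mul, hL.1, max_comm]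
  exact congr($this a)

theorem piSS_approxDiagonal (n : ℕ) : piSS (approxDiagonal δ n) = inclB (δ 0) := by
  have hidem (k : ℕ) : (δ k - δ (k + 1)) * (δ k - δ (k + 1)) = δ k - δ (k + 1) := by
    simp [hL.mul_delta_sub_delta_succ, hL.charLE_delta]
  calc piSS (approxDiagonal δ n)
      = inclB (∑ k ∈ Finset.range (n + 1), (δ k - δ (k + 1)) + δ (n + 1) * δ (n + 1)) := by
        simp [approxDiagonal, piSS_add, piSS_sum, piSS_elemT, hidem, inclB, map_sum]
    _ = inclB (δ 0) := by rw [Finset.sum_range_sub', hL.1, max_self, sub_add_cancel]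

theorem tsmulL_sub_tsmulR_approxDiagonal (n : ℕ) (a : L) :
    tsmulL a (approxDiagonal δ n) - tsmulR a (approxDiagonal δ n) =
      elemT (a * δ (n + 1)) (δ (n + 1)) - elemT (δ (n + 1)) (δ (n + 1) * a) := by
  have hcentral (k : ℕ) : tsmulL a (elemT (δ k - δ (k + 1)) (δ k - δ (k + 1))) =
      tsmulR a (elemT (δ k - δ (k + 1)) (δ k - δ (k + 1))) := by
    rw [tsmulL_elemT, tsmulR_elemT, hL.mul_delta_sub_delta_succ, hL.delta_sub_delta_succ_mul,
      elemT_smul_left, elemT_smul_right]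
  simp only [approxDiagonal, tsmulL_add, tsmulR_add, tsmulL_sum, tsmulR_sum, hcentral,
    tsmulL_elemT, tsmulR_elemT]
  abel

theorem tendsto_tsmulL_sub_tsmulR_approxDiagonal (a : L) :
    Tendsto (fun n => tsmulL a (approxDiagonal δ n) - tsmulR a (approxDiagonal δ n))
      atTop (𝓝 0) := by
  have hbound (n : ℕ) : ‖commutatorCLM L (approxDiagonal δ n)‖ ≤ 2 := by
    refine opNorm_le_bound _ zero_le_two fun b => ?_
    rw [commutatorCLM_apply, hL.tsmulL_sub_tsmulR_approxDiagonal]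
    have h1 := (norm_elemT_le (b * δ (n + 1)) (δ (n + 1))).trans
      (mul_le_mul_of_nonneg_right (norm_mul_le b (δ (n + 1))) (norm_nonneg _))
    have h2 := (norm_elemT_le (δ (n + 1)) (δ (n + 1) * b)).trans
      (mul_le_mul_of_nonneg_left (norm_mul_le (δ (n + 1)) b) (norm_nonneg _))
    rw [hL.norm_delta] at h1 h2
    linarith [norm_sub_le (elemT (b * δ (n + 1)) (δ (n + 1)))
      (elemT (δ (n + 1)) (δ (n + 1) * b))]
  have hdelta (k : ℕ) :
      Tendsto (fun n => commutatorCLM L (approxDiagonal δ n) (δ k)) atTop (𝓝 0) := by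
    refine tendsto_const_nhds.congr' (eventually_atTop.2 ⟨k, fun n hn => ?_⟩)
    beta_reduce
    rw [eq_comm, commutatorCLM_apply, hL.tsmulL_sub_tsmulR_approxDiagonal, hL.1, hL.1,
      max_eq_right (by omega), max_eq_left (by omega), sub_self]
  simpa only [commutatorCLM_apply] using
    tendsto_zero_of_norm_le_of_tendsto_span hbound hL.2.2 hdelta a

theorem strongPseudoAmenable : StrongPseudoAmenable L :=
  strongPseudoAmenable_of_piSS_eq_identity (D := DirSys.ofDirected ℕ) (δ 0) hL.delta_zero_mul
    hL.mul_delta_zero hL.piSS_approxDiagonal fun a =>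
      DirSys.tendsto_iff.2 (hL.tendsto_tsmulL_sub_tsmulR_approxDiagonal a)

/-- The approximate identity property at `δ n` sends `charLE n ⊗ charLE n` to `1`, and asymptotic
centrality at `δ n` identifies `coeff n ⊗ charLE n` with it in the limit. -/
theorem tendsto_apply_coeff_smulRight_charLE {D : DirSys} {m : D.ι → TensorBidual L} (n : ℕ)
    (hcomm : D.Tendsto (fun α => tsmulL (δ n) (m α) - tsmulR (δ n) (m α)) 0)
    (happ : D.Tendsto (fun α => bsmulR (δ n) (piSS (m α))) (inclB (δ n))) :
    Tendsto (fun α => m α ((coeff δ n).smulRight (charLE δ n))) D.filter (𝓝 1) := by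
  have hπ : piStar L (dualLOp L (δ n) (charLE δ n)) = (charLE δ n).smulRight (charLE δ n) := by
    ext x y
    exact (hL.charLE_mul_delta_self n (x * y)).trans (hL.charLE_mul n x y)
  have hleft : leftBil L (δ n) ((coeff δ n).smulRight (charLE δ n)) =
      (charLE δ n).smulRight (charLE δ n) := by
    ext x y
    exact congrArg (· * charLE δ n y) (hL.coeff_delta_self_mul n x)
  have hright : rightBil L (δ n) ((coeff δ n).smulRight (charLE δ n)) =
      (coeff δ n).smulRight (charLE δ n) := by
    ext x y
    exact congrArg (coeff δ n x * ·) (hL.charLE_mul_delta_self n y)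
  have h1 := happ.apply_piStar_dualLOp (charLE δ n)
  have h2 := hcomm.apply_leftBil_sub_rightBil ((coeff δ n).smulRight (charLE δ n))
  rw [hπ, hL.charLE_delta, if_pos le_rfl] at h1
  rw [hleft, hright] at h2
  simpa using h1.sub h2

theorem not_amenableBanachAlgebra : ¬ AmenableBanachAlgebra L := by
  rintro ⟨D, m, C, -, hC, hcomm, happ⟩
  have hle (N : ℕ) : (N : ℝ) ≤ C := by
    set F := ∑ n ∈ Finset.range N, (coeff δ n).smulRight (charLE δ n)
    have hF : Tendsto (fun α => m α F) D.filter (𝓝 N) := by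
      simpa [F] using tendsto_finsetSum (Finset.range N) fun n _ =>
        hL.tendsto_apply_coeff_smulRight_charLE n (hcomm (δ n)) (happ (δ n))
    refine le_of_tendsto' (by simpa using hF.norm) fun α => ?_
    -- `TensorBidual` carries its own norm instance, so `le_opNorm` needs the ring hom spelled out
    calc ‖m α F‖ ≤ ‖m α‖ * ‖F‖ := le_opNorm (σ₁₂ := RingHom.id ℂ) (m α) F
      _ ≤ ‖m α‖ := mul_le_of_le_one_right (norm_nonneg _)
          (hL.norm_sum_coeff_smulRight_charLE_le N)
      _ ≤ C := hC α
  obtain ⟨N, hN⟩ := exists_nat_gt C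
  exact (hle N).not_gt hN

end IsL1SemigroupAlgebra

theorem strongPseudoAmenable_not_amenable_maxSemigroupAlgebra_general
    (L : Type) [NonUnitalNormedRing L] [NormedSpace ℂ L] [IsScalarTower ℂ L L]
    [SMulCommClass ℂ L L]
    (δ : ℕ → L) (hL : IsL1SemigroupAlgebra ℕ max L δ) :
    StrongPseudoAmenable L ∧ ¬ AmenableBanachAlgebra L :=
  ⟨hL.strongPseudoAmenable, hL.not_amenableBanachAlgebra⟩

/-- Let `S = ℕ` with the semigroup operation `m · n = max m n`.  Then
`ℓ¹(S)` is strong pseudo-amenable but not amenable. -/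
theorem strongPseudoAmenable_not_amenable_maxSemigroupAlgebra
    (L : Type) [NonUnitalNormedRing L] [NormedSpace ℂ L] [IsScalarTower ℂ L L]
    [SMulCommClass ℂ L L] [CompleteSpace L]
    (δ : ℕ → L) (hL : IsL1SemigroupAlgebra ℕ max L δ) :
    StrongPseudoAmenable L ∧ ¬ AmenableBanachAlgebra L :=
  strongPseudoAmenable_not_amenable_maxSemigroupAlgebra_general L δ hL
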